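/- (Corrected formula.) For any real m×r matrix C and any real r×n matrix R (with no rank assumptions), the Moore–Penrose pseudoinverse of the product A = CR satisfies (CR)⁺ = (C⁺CR)⁺ (CRR⁺)⁺. -/

import Mathlib

/-!
With `P = C⁺C` and `Q = RR⁺` (symmetric idempotents), `X = (PR)⁺` absorbs `P` on the right and
`Y = (CQ)⁺` absorbs `Q` on the left, so `XY = X (C⁺CRR⁺) Y`. This identity lets the Penrose
equations of `X` and `Y` be glued: `(CR)(XY) = (CRR⁺)Y` and `(XY)(CR) = X(C⁺CR)` are symmetric,
and the remaining two equations follow. Uniqueness of the pseudoinverse concludes.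
-/

open Matrix

/-- `G` satisfies the four Penrose equations for `A`, i.e. `G` is the Moore–Penrose
pseudoinverse of `A`. -/
def IsMoorePenrose {m n : ℕ} (A : Matrix (Fin m) (Fin n) ℝ)
    (G : Matrix (Fin n) (Fin m) ℝ) : Prop :=
  A * G * A = A ∧ G * A * G = G ∧ (A * G)ᵀ = A * G ∧ (G * A)ᵀ = G * A

namespace IsMoorePenrose

variable {m n : ℕ} {A : Matrix (Fin m) (Fin n) ℝ} {G H : Matrix (Fin n) (Fin m) ℝ}

theorem unique (hG : IsMoorePenrose A G) (hH : IsMoorePenrose A H) : G = H := by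
  obtain ⟨hG₁, hG₂, hG₃, hG₄⟩ := hG
  obtain ⟨hH₁, hH₂, hH₃, hH₄⟩ := hH
  have hAG : A * G = A * H :=
    calc A * G = (A * H * A * G)ᵀ := by rw [hH₁, hG₃]
      _ = (A * G)ᵀ * (A * H)ᵀ := by rw [← transpose_mul]; simp only [Matrix.mul_assoc]
      _ = A * H := by rw [hG₃, hH₃, ← Matrix.mul_assoc, hG₁]
  have hGA : G * A = H * A :=
    calc G * A = (G * (A * H * A))ᵀ := by rw [hH₁, hG₄]
      _ = (H * A)ᵀ * (G * A)ᵀ := by rw [← transpose_mul]; simp only [Matrix.mul_assoc]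
      _ = H * A := by rw [hH₄, hG₄, Matrix.mul_assoc H, ← Matrix.mul_assoc A, hG₁]
  calc G = G * A * G := hG₂.symm
    _ = H * A * H := by rw [hGA, Matrix.mul_assoc, hAG, ← Matrix.mul_assoc]
    _ = H := hH₂

theorem transpose (hG : IsMoorePenrose A G) : IsMoorePenrose Aᵀ Gᵀ := by
  obtain ⟨h₁, h₂, h₃, h₄⟩ := hG
  refine ⟨?_, ?_, ?_, ?_⟩ <;>
    simp only [← transpose_mul, Matrix.mul_assoc, transpose_transpose] at * <;>
    simp only [h₁, h₂, h₃, h₄]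

theorem mul_eq_self_of_mul_left_eq (hG : IsMoorePenrose A G) {P : Matrix (Fin m) (Fin m) ℝ}
    (hP : P.IsSymm) (hPA : P * A = A) : G * P = G := by
  have hAP : Aᵀ * P = Aᵀ := by rw [← hP, ← transpose_mul, hPA]
  calc G * P = G * (A * G)ᵀ * P := by rw [hG.2.2.1, ← Matrix.mul_assoc, hG.2.1]
    _ = G * (A * G)ᵀ := by rw [transpose_mul, Matrix.mul_assoc, Matrix.mul_assoc, hAP]
    _ = G := by rw [hG.2.2.1, ← Matrix.mul_assoc, hG.2.1]

theorem mul_eq_self_of_mul_right_eq (hG : IsMoorePenrose A G) {Q : Matrix (Fin n) (Fin n) ℝ}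
    (hQ : Q.IsSymm) (hAQ : A * Q = A) : Q * G = G := by
  have := hG.transpose.mul_eq_self_of_mul_left_eq hQ (by rw [← hQ, ← transpose_mul, hAQ])
  rw [← transpose_transpose (Q * G), transpose_mul, hQ, this, transpose_transpose]

end IsMoorePenrose

theorem isMoorePenrose_mul_of_mul_eq {m r n : ℕ}
    {C : Matrix (Fin m) (Fin r) ℝ} {R : Matrix (Fin r) (Fin n) ℝ}
    {Cp : Matrix (Fin r) (Fin m) ℝ} {Rp : Matrix (Fin n) (Fin r) ℝ}
    {X : Matrix (Fin n) (Fin r) ℝ} {Y : Matrix (Fin r) (Fin m) ℝ}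
    (hC : C * Cp * C = C) (hR : R * Rp * R = R)
    (hX : IsMoorePenrose (Cp * C * R) X) (hY : IsMoorePenrose (C * R * Rp) Y)
    (hXY : X * Y = X * (Cp * C * R) * Rp * Y) :
    IsMoorePenrose (C * R) (X * Y) := by
  have hCR : C * (Cp * C * R) = C * R := by simp only [← Matrix.mul_assoc, hC]
  have hRC : C * R * Rp * R = C * R := by simp only [Matrix.mul_assoc, hR]
  have hleft : C * R * (X * Y) = C * R * Rp * Y :=
    calc C * R * (X * Y) = C * (Cp * C * R) * (X * (Cp * C * R) * Rp * Y) := by rw [hCR, hXY]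
      _ = C * (Cp * C * R * X * (Cp * C * R)) * Rp * Y := by simp only [Matrix.mul_assoc]
      _ = C * R * Rp * Y := by rw [hX.1, hCR]
  have hright : X * Y * (C * R) = X * (Cp * C * R) :=
    calc X * Y * (C * R) = X * (Cp * C * R) * Rp * Y * (C * R * Rp * R) := by rw [hXY, hRC]
      _ = X * Cp * (C * R * Rp * Y * (C * R * Rp)) * R := by simp only [Matrix.mul_assoc]
      _ = X * (Cp * C * R) := by
        rw [hY.1, Matrix.mul_assoc _ (C * R * Rp) R, hRC]; simp only [Matrix.mul_assoc]
  refine ⟨?_, ?_, ?_, ?_⟩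
  · calc C * R * (X * Y) * (C * R) = C * R * Rp * Y * (C * R * Rp * R) := by rw [hleft, hRC]
      _ = C * R * Rp * Y * (C * R * Rp) * R := by simp only [Matrix.mul_assoc]
      _ = C * R := by rw [hY.1, hRC]
  · calc X * Y * (C * R) * (X * Y) = X * (Cp * C * R) * X * Y := by
          rw [hright]; simp only [Matrix.mul_assoc]
      _ = X * Y := by rw [hX.2.1]
  · rw [hleft, hY.2.2.1]
  · rw [hright, hX.2.2.2]

/-- Corrected formula: for any `C` and `R` (no rank assumptions),
`(C * R)⁺ = (C⁺ * C * R)⁺ * (C * R * R⁺)⁺`. -/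
theorem corrected_formula (m r n : ℕ)
    (C : Matrix (Fin m) (Fin r) ℝ) (R : Matrix (Fin r) (Fin n) ℝ)
    (Ap : Matrix (Fin n) (Fin m) ℝ)
    (Cp : Matrix (Fin r) (Fin m) ℝ) (Rp : Matrix (Fin n) (Fin r) ℝ)
    (X : Matrix (Fin n) (Fin r) ℝ) (Y : Matrix (Fin r) (Fin m) ℝ)
    (hAp : IsMoorePenrose (C * R) Ap)
    (hCp : IsMoorePenrose C Cp) (hRp : IsMoorePenrose R Rp)
    (hX : IsMoorePenrose (Cp * C * R) X)
    (hY : IsMoorePenrose (C * R * Rp) Y) :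
    Ap = X * Y := by
  have hXP : X * (Cp * C) = X :=
    hX.mul_eq_self_of_mul_left_eq hCp.2.2.2 (by simp only [← Matrix.mul_assoc, hCp.2.1])
  have hQY : R * Rp * Y = Y :=
    hY.mul_eq_self_of_mul_right_eq hRp.2.2.1 (by
      rw [Matrix.mul_assoc C R Rp, Matrix.mul_assoc C, ← Matrix.mul_assoc (R * Rp) R, hRp.1])
  have hXY : X * Y = X * (Cp * C * R) * Rp * Y := by
    conv_lhs => rw [← hXP, ← hQY]
    simp only [Matrix.mul_assoc]
  exact hAp.unique (isMoorePenrose_mul_of_mul_eq hCp.1 hRp.1 hX hY hXY)
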